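/- arXiv:1408.6140 — 3 statements merged into one kernel-verified Lean document; each statement's English description precedes it below -/
import Mathlib

section
/- Fix real numbers α, γ and write (1-z)^α (1+z)^γ = Σ_{k≥0} c_k z^k for |z| < 1. Define d_ℓ(n) = Σ_{k=0}^{⌊ℓ/2⌋} (-1)^k C(n,k) c_{ℓ-2k} for natural numbers n, ℓ. Then lim_{n→∞} d_ℓ(n)/n^{ℓ/2} = 0 if ℓ is odd, and lim_{n→∞} d_ℓ(n)/n^{ℓ/2} = (-1)^{ℓ/2}/(ℓ/2)! if ℓ is even. -/
open Filter Complex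

private lemma lemA (k : ℕ) : Tendsto (fun n : ℕ => (n.choose k : ℝ) / (n : ℝ) ^ k) atTop
    (nhds (1 / (k.factorial : ℝ))) := by
  have h1 : Tendsto (fun n : ℕ => (∏ i ∈ Finset.range k, (1 - (i : ℝ) / n)) / (k.factorial : ℝ))
      atTop (nhds ((∏ i ∈ Finset.range k, (1 : ℝ)) / (k.factorial : ℝ))) := by
    apply Tendsto.div_const
    apply tendsto_finset_prod
    intro i _
    simpa using tendsto_const_nhds.sub (tendsto_const_div_atTop_nhds_zero_nat (i : ℝ))
  simp only [Finset.prod_const_one] at h1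
  refine h1.congr' ?_
  filter_upwards [eventually_ge_atTop k, eventually_ge_atTop 1] with n hn hn1
  have hn0 : (n : ℝ) ≠ 0 := by
    simpa using Nat.one_le_iff_ne_zero.mp hn1
  have hd : ((n.descFactorial k : ℕ) : ℝ) = ∏ i ∈ Finset.range k, ((n : ℝ) - i) := by
    rw [Nat.descFactorial_eq_prod_range, Nat.cast_prod]
    refine Finset.prod_congr rfl fun i hi => ?_
    rw [Nat.cast_sub (le_trans (Finset.mem_range.mp hi).le hn)]
  have hch : (n.choose k : ℝ) = (∏ i ∈ Finset.range k, ((n : ℝ) - i)) / (k.factorial : ℝ) := by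
    rw [← hd, Nat.descFactorial_eq_factorial_mul_choose]
    push_cast
    field_simp
  have hp : ∏ i ∈ Finset.range k, (1 - (i : ℝ) / n)
      = (∏ i ∈ Finset.range k, ((n : ℝ) - i)) / (n : ℝ) ^ k := by
    calc ∏ i ∈ Finset.range k, (1 - (i : ℝ) / n)
        = ∏ i ∈ Finset.range k, ((n : ℝ) - i) / (n : ℝ) :=
          Finset.prod_congr rfl fun i _ => by field_simp
      _ = (∏ i ∈ Finset.range k, ((n : ℝ) - i)) / (n : ℝ) ^ k := by
          rw [Finset.prod_div_distrib, Finset.prod_const, Finset.card_range]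
  rw [hp, hch]
  ring

private lemma lemB {k : ℕ} {r : ℝ} (hk : (k : ℝ) < r) :
    Tendsto (fun n : ℕ => (n.choose k : ℝ) / (n : ℝ) ^ r) atTop (nhds 0) := by
  have h2 : Tendsto (fun n : ℕ => (n : ℝ) ^ (-(r - (k : ℝ)))) atTop (nhds 0) :=
    (tendsto_rpow_neg_atTop (by linarith)).comp tendsto_natCast_atTop_atTop
  have h := (lemA k).mul h2
  rw [mul_zero] at h
  refine h.congr' ?_
  filter_upwards [eventually_ge_atTop 1] with n hn1
  have hn0 : (0 : ℝ) < (n : ℝ) := by exact_mod_cast hn1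
  have : (n : ℝ) ^ r = (n : ℝ) ^ k * (n : ℝ) ^ (r - (k : ℝ)) := by
    rw [← Real.rpow_natCast (n : ℝ) k, ← Real.rpow_add hn0]
    ring_nf
  rw [this, Real.rpow_neg hn0.le]
  field_simp

/-- Asymptotics of `d_ℓ(n) = ∑_{k=0}^{⌊ℓ/2⌋} (-1)^k C(n,k) c_{ℓ-2k}` where the `c_k` are the
Taylor coefficients of `(1-z)^α (1+z)^γ` on the unit disk: `d_ℓ(n)/n^{ℓ/2}` tends to `0` if
`ℓ` is odd and to `(-1)^{ℓ/2}/(ℓ/2)!` if `ℓ` is even. -/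
theorem d_asymptotics (α γ : ℝ) (c : ℕ → ℝ)
    (hc : ∀ z : ℂ, ‖z‖ < 1 →
      HasSum (fun k : ℕ => (c k : ℂ) * z ^ k) ((1 - z) ^ (α : ℂ) * (1 + z) ^ (γ : ℂ)))
    (ℓ : ℕ) :
    (Odd ℓ → Tendsto
        (fun n : ℕ => (∑ k ∈ Finset.range (ℓ / 2 + 1),
            (-1 : ℝ) ^ k * (n.choose k : ℝ) * c (ℓ - 2 * k)) / (n : ℝ) ^ ((ℓ : ℝ) / 2))
        atTop (nhds 0)) ∧
    (Even ℓ → Tendsto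
        (fun n : ℕ => (∑ k ∈ Finset.range (ℓ / 2 + 1),
            (-1 : ℝ) ^ k * (n.choose k : ℝ) * c (ℓ - 2 * k)) / (n : ℝ) ^ ((ℓ : ℝ) / 2))
        atTop (nhds ((-1 : ℝ) ^ (ℓ / 2) / ((ℓ / 2).factorial : ℝ)))) := by
  have hc0 : c 0 = 1 := by
    have h1 : HasSum (fun k : ℕ => (c k : ℂ) * (0 : ℂ) ^ k) ((c 0 : ℂ)) := by
      have := hasSum_single (f := fun k : ℕ => (c k : ℂ) * (0 : ℂ) ^ k) 0
        (fun b hb => by simp [zero_pow hb])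
      simpa using this
    have h2 := hc 0 (by norm_num)
    have h3 := h1.unique h2
    simp [Complex.one_cpow] at h3
    exact_mod_cast h3
  have hsplit : ∀ (f : ℕ → ℕ → ℝ), (fun n : ℕ => (∑ k ∈ Finset.range (ℓ / 2 + 1), f n k)
      / (n : ℝ) ^ ((ℓ : ℝ) / 2))
      = fun n : ℕ => ∑ k ∈ Finset.range (ℓ / 2 + 1), f n k / (n : ℝ) ^ ((ℓ : ℝ) / 2) := by
    intro f; funext n; rw [Finset.sum_div]
  constructor
  · intro hodd
    rw [hsplit]
    have : (0 : ℝ) = ∑ k ∈ Finset.range (ℓ / 2 + 1), (0 : ℝ) := by simp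
    rw [this]
    apply tendsto_finset_sum
    intro k hk
    have hkr : (k : ℝ) < (ℓ : ℝ) / 2 := by
      rw [Finset.mem_range, Nat.lt_succ_iff] at hk
      have h2k : 2 * k < ℓ := by
        obtain ⟨m, hm⟩ := hodd
        omega
      have : (2 * k : ℝ) < (ℓ : ℝ) := by exact_mod_cast h2k
      linarith
    have := ((lemB hkr).const_mul ((-1 : ℝ) ^ k * c (ℓ - 2 * k)))
    rw [mul_zero] at this
    refine this.congr fun n => ?_
    ring
  · intro heven
    set m := ℓ / 2 with hm
    have hℓ : ℓ = 2 * m := by obtain ⟨t, ht⟩ := heven; omega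
    have hr : (ℓ : ℝ) / 2 = (m : ℝ) := by
      rw [hℓ]; push_cast; ring
    rw [hsplit]
    have hsum : ((-1 : ℝ) ^ m / (m.factorial : ℝ))
        = ∑ k ∈ Finset.range (m + 1),
            (if k = m then (-1 : ℝ) ^ m / (m.factorial : ℝ) else 0) := by
      rw [Finset.sum_ite_eq' (Finset.range (m + 1)) m]
      simp
    rw [hsum]
    apply tendsto_finset_sum
    intro k hk
    rw [Finset.mem_range, Nat.lt_succ_iff] at hk
    rcases eq_or_lt_of_le hk with hkm | hkm
    · subst hkm
      simp only [if_pos rfl]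
      have : ℓ - 2 * m = 0 := by omega
      rw [this, hc0]
      have h1 := (lemA m).const_mul ((-1 : ℝ) ^ m)
      have heq : (fun n : ℕ => (-1 : ℝ) ^ m * (n.choose m : ℝ) * 1 / (n : ℝ) ^ ((ℓ : ℝ) / 2))
          = fun n : ℕ => (-1 : ℝ) ^ m * ((n.choose m : ℝ) / (n : ℝ) ^ m) := by
        funext n
        rw [hr, ← Real.rpow_natCast (n : ℝ) m]
        ring
      rw [heq]
      convert h1 using 2
      simp [div_eq_mul_inv, mul_comm]
    · rw [if_neg (by omega)]
      have hkr : (k : ℝ) < (ℓ : ℝ) / 2 := by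
        rw [hr]; exact_mod_cast hkm
      have := (lemB hkr).const_mul ((-1 : ℝ) ^ k * c (ℓ - 2 * k))
      rw [mul_zero] at this
      refine this.congr fun n => ?_
      ring
end

section
/- Fix reals a, b > 0. Then lim_{n→∞} ₁F₂(-n; a, b; z/n) = ₀F₂(-; a, b; -z) uniformly on compact subsets of ℂ, where ₁F₂(-n; a, b; x) = Σ_{k=0}^{n} (-n)_k x^k / ((a)_k (b)_k k!) and ₀F₂(-; a, b; w) = Σ_{k=0}^{∞} w^k / ((a)_k (b)_k k!). -/
open Filter Topology

/-!
Since `(-n)_k = 0` for `k > n`, the finite sum is the series `∑ₖ λₙ(k) zᵏ / ((a)ₖ (b)ₖ k!)`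
with multipliers `λₙ(k) = (-n)ₖ / nᵏ = ∏_{i<k} (i/n - 1)`, which satisfy `|λₙ(k)| ≤ 1` and
`λₙ(k) → (-1)ᵏ`. On `‖z‖ ≤ R` the terms are dominated by `(R / (a b))ᵏ / k!`, so Tannery's
theorem applied to `∑ₖ |λₙ(k) - (-1)ᵏ| Rᵏ / ((a)ₖ (b)ₖ k!)` gives uniform convergence.
-/

/-- Rising factorial (Pochhammer symbol). -/
noncomputable def poch (a : ℝ) (m : ℕ) : ℝ := ∏ i ∈ Finset.range m, (a + i)

theorem tendstoUniformlyOn_tsum_smul_of_tendsto {α ι β 𝕜 E : Type*} [NormedField 𝕜]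
    [NormedAddCommGroup E] [NormedSpace 𝕜 E] [CompleteSpace E] {𝓕 : Filter α}
    {c : α → ι → 𝕜} {μ : ι → 𝕜} {g : ι → β → E} {s : Set β} {C : ℝ} {bound : ι → ℝ}
    (h_sum : Summable bound) (hg : ∀ k, ∀ x ∈ s, ‖g k x‖ ≤ bound k)
    (hc : ∀ k, Tendsto (c · k) 𝓕 (𝓝 (μ k))) (hC : ∀ᶠ n in 𝓕, ∀ k, ‖c n k‖ ≤ C) :
    TendstoUniformlyOn (fun n x => ∑' k, c n k • g k x) (fun x => ∑' k, μ k • g k x) 𝓕 s := by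
  rcases 𝓕.eq_or_neBot with rfl | _
  · simp [TendstoUniformlyOn]
  have hμ (k : ι) : ‖μ k‖ ≤ C :=
    le_of_tendsto (tendsto_norm.comp (hc k)) (hC.mono fun n hn => hn k)
  -- `bound` may take negative values when `s` is empty.
  have hg' (k : ι) (x : β) (hx : x ∈ s) : ‖g k x‖ ≤ |bound k| :=
    (hg k x hx).trans (le_abs_self _)
  have hdiff : ∀ᶠ n in 𝓕, ∀ k, ‖c n k - μ k‖ * |bound k| ≤ (C + C) * |bound k| :=
    hC.mono fun n hn k => by gcongr; exact (norm_sub_le _ _).trans (add_le_add (hn k) (hμ k))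
  have hB : Tendsto (fun n => ∑' k, ‖c n k - μ k‖ * |bound k|) 𝓕 (𝓝 0) := by
    have := tendsto_tsum_of_dominated_convergence (f := fun n k => ‖c n k - μ k‖ * |bound k|)
      (g := fun _ => 0) (h_sum.abs.mul_left (C + C))
      (fun k => by simpa using ((hc k).sub_const (μ k)).norm.mul_const |bound k|)
      (hdiff.mono fun n hn k => by
        rw [Real.norm_of_nonneg (by positivity)]; exact hn k)
    rwa [tsum_zero] at this
  rw [Metric.tendstoUniformlyOn_iff]
  intro ε hε
  filter_upwards [hB.eventually (gt_mem_nhds hε), hC, hdiff] with n hn hCn hdiffn x hx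
  have hsmul_le {d : ι → 𝕜} {D : ℝ} (hd : ∀ k, ‖d k‖ ≤ D) (k : ι) :
      ‖d k • g k x‖ ≤ D * |bound k| := by
    rw [norm_smul]
    exact mul_le_mul (hd k) (hg' k x hx) (norm_nonneg _) ((norm_nonneg _).trans (hd k))
  have hsum_diff : Summable fun k => ‖c n k - μ k‖ * |bound k| :=
    (h_sum.abs.mul_left (C + C)).of_nonneg_of_le (fun k => by positivity) hdiffn
  rw [dist_eq_norm, ← (h_sum.abs.mul_left C).of_norm_bounded (hsmul_le hμ) |>.tsum_sub
    ((h_sum.abs.mul_left C).of_norm_bounded (hsmul_le hCn))]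
  refine (tsum_of_norm_bounded hsum_diff.hasSum fun k => ?_).trans_lt hn
  rw [← sub_smul, norm_smul, norm_sub_rev]
  gcongr
  exact hg' k x hx

lemma poch_pos {a : ℝ} (ha : 0 < a) (k : ℕ) : 0 < poch a k :=
  Finset.prod_pos fun i _ => by positivity

lemma pow_le_poch {a : ℝ} (ha : 0 ≤ a) (k : ℕ) : a ^ k ≤ poch a k :=
  calc a ^ k = ∏ _i ∈ Finset.range k, a := by simp
    _ ≤ poch a k := Finset.prod_le_prod (fun _ _ => ha) fun i _ => by simp

lemma poch_neg_natCast_eq_zero {n k : ℕ} (h : n < k) : poch (-n) k = 0 :=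
  Finset.prod_eq_zero (Finset.mem_range.2 h) (by simp)

lemma abs_poch_neg_natCast_le (n k : ℕ) : |poch (-n) k| ≤ (n : ℝ) ^ k := by
  rcases lt_or_ge n k with h | h
  · simp [poch_neg_natCast_eq_zero h]
  calc |poch (-n) k| = ∏ i ∈ Finset.range k, |-(n : ℝ) + i| := Finset.abs_prod _ _
    _ ≤ ∏ _i ∈ Finset.range k, (n : ℝ) := by
      refine Finset.prod_le_prod (fun _ _ => abs_nonneg _) fun i hi => abs_le.2 ⟨?_, ?_⟩
      · simp
      · have : (i : ℝ) ≤ n := by exact_mod_cast (Finset.mem_range.1 hi).le.trans h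
        linarith
    _ = (n : ℝ) ^ k := by simp

lemma tendsto_poch_neg_natCast_div_pow (k : ℕ) :
    Tendsto (fun n : ℕ => poch (-n) k / (n : ℝ) ^ k) atTop (𝓝 ((-1) ^ k)) := by
  have hfactor (i : ℕ) : Tendsto (fun n : ℕ => (-(n : ℝ) + i) / n) atTop (𝓝 (-1)) := by
    have := (tendsto_const_div_atTop_nhds_zero_nat (i : ℝ)).const_add (-1)
    rw [add_zero] at this
    refine this.congr' ((eventually_ne_atTop 0).mono fun n hn => ?_)
    field_simp
  simpa [poch, Finset.prod_div_distrib] using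
    tendsto_finsetProd (Finset.range k) fun i _ => hfactor i

lemma summable_pow_div_poch_mul_poch_mul_factorial {a b R : ℝ} (ha : 0 < a) (hb : 0 < b)
    (hR : 0 ≤ R) : Summable fun k : ℕ => R ^ k / (poch a k * poch b k * k.factorial) := by
  refine (Real.summable_pow_div_factorial (R / (a * b))).of_nonneg_of_le
    (fun k => by have := poch_pos ha k; have := poch_pos hb k; positivity) fun k => ?_
  rw [div_pow, div_div, mul_pow]
  gcongr
  · exact (poch_pos ha k).le
  exacts [pow_le_poch ha.le k, pow_le_poch hb.le k]

/-- `₁F₂(-n; a, b; z/n) → ₀F₂(-; a, b; -z)` uniformly on compact subsets of `ℂ`. -/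
theorem oneF_two_tendsto_zeroF_two (a b : ℝ) (ha : a > 0) (hb : b > 0) :
    ∀ K : Set ℂ, IsCompact K →
      TendstoUniformlyOn
        (fun (n : ℕ) (z : ℂ) => ∑ k ∈ Finset.range (n + 1),
          (poch (-(n : ℝ)) k : ℂ) * (z / (n : ℂ)) ^ k /
            ((poch a k : ℂ) * (poch b k : ℂ) * (k.factorial : ℂ)))
        (fun z : ℂ => ∑' k : ℕ,
          (-z) ^ k / ((poch a k : ℂ) * (poch b k : ℂ) * (k.factorial : ℂ)))
        atTop K := by
  intro K hK
  obtain ⟨R, hR0, hR⟩ := hK.isBounded.exists_pos_norm_le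
  have hterm_le (k : ℕ) (z : ℂ) (hz : z ∈ K) :
      ‖z ^ k / ((poch a k : ℂ) * (poch b k : ℂ) * (k.factorial : ℂ))‖ ≤
        R ^ k / (poch a k * poch b k * k.factorial) := by
    have := poch_pos ha k
    have := poch_pos hb k
    rw [norm_div, norm_pow, ← Complex.ofReal_natCast, ← Complex.ofReal_mul,
      ← Complex.ofReal_mul, Complex.norm_of_nonneg (by positivity)]
    gcongr
    exact hR z hz
  have hmult_le (n k : ℕ) : ‖poch (-n) k / (n : ℝ) ^ k‖ ≤ 1 := by
    rw [norm_div, Real.norm_eq_abs, norm_pow, Real.norm_natCast]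
    exact div_le_one_of_le₀ (abs_poch_neg_natCast_le n k) (by positivity)
  refine (tendstoUniformlyOn_tsum_smul_of_tendsto
    (summable_pow_div_poch_mul_poch_mul_factorial ha hb hR0.le) hterm_le
    tendsto_poch_neg_natCast_div_pow (Eventually.of_forall hmult_le)).congr
    (Eventually.of_forall fun n z _ => ?_) |>.congr_right fun z _ => ?_
  · dsimp only
    rw [tsum_eq_sum fun k hk => ?_]
    · refine Finset.sum_congr rfl fun k _ => ?_
      rw [Complex.real_smul]
      push_cast
      ring
    rw [poch_neg_natCast_eq_zero (by simpa using hk), zero_div, zero_smul]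
  · refine tsum_congr fun k => ?_
    rw [Complex.real_smul, neg_pow]
    push_cast
    ring
end

section
/- Fix r ≥ 1, reals α_1,…,α_r, β > -1, and positive reals q_1,…,q_r with q_1+···+q_r = 1. Define F_n(x) = ₍r+1₎F_r(-⌊q_1n⌋-···-⌊q_rn⌋-β, α_1+⌊q_1n⌋+1,…,α_r+⌊q_rn⌋+1; α_1+1,…,α_r+1; x) as a power series in x. Then lim_{n→∞} F_n(z/n^{r+1}) = ₀F_r(-; α_1+1,…,α_r+1; -q_1···q_r z) uniformly on compact subsets of ℂ. -/
/-!
The `k`-th term of `F_n(z / n^{r+1})` is `c_{n,k} z^k` with `c_{n,k} = ∏_{i<k} ρ_{n,i}`, where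
`ρ_{n,i}` is the ratio of consecutive coefficients. Since `⌊q_j n⌋ / n → q_j`, each `ρ_{n,i}`
tends to the corresponding ratio for `₀F_r(-; α_1+1,…,α_r+1; -q_1⋯q_r z)`, so the coefficients
converge. For `|z| ≤ R` every factor of `ρ_{n,i}` is `O(1 / min(n, i+1))`, hence
`|ρ_{n,i}| R ≤ max(1/2, A/(i+1))` once `n ≥ 2A`; the products of these bounds are summable and
independent of `n`, and Tannery's theorem, taken along `n → ∞` jointly with `z ∈ K`, gives
uniform convergence on `K`.
-/

open Filter

open Topology Finset

theorem tendstoUniformlyOn_iff_tendsto_sub {ι α E : Type*} [SeminormedAddCommGroup E]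
    {F : ι → α → E} {f : α → E} {l : Filter ι} {s : Set α} :
    TendstoUniformlyOn F f l s ↔
      Tendsto (fun p : ι × α => f p.2 - F p.1 p.2) (l ×ˢ 𝓟 s) (𝓝 0) := by
  rw [tendstoUniformlyOn_iff_tendsto, tendsto_uniformity_iff_dist_tendsto_zero]
  simp only [dist_eq_norm]
  exact tendsto_zero_iff_norm_tendsto_zero.symm

theorem tendstoUniformlyOn_tsum_of_dominated_convergence {ι α β E : Type*}
    [NormedAddCommGroup E] [CompleteSpace E] {l : Filter ι} {s : Set α}
    {f : ι → β → α → E} {g : β → α → E} {bound : β → ℝ} (h_sum : Summable bound)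
    (h_lim : ∀ k, TendstoUniformlyOn (fun n => f n k) (g k) l s)
    (h_bound : ∀ᶠ n in l, ∀ k, ∀ x ∈ s, ‖f n k x‖ ≤ bound k) :
    TendstoUniformlyOn (fun n x => ∑' k, f n k x) (fun x => ∑' k, g k x) l s := by
  rcases l.eq_or_neBot with rfl | _
  · exact tendstoUniformlyOn_iff_tendsto.2 (by simp)
  have hg_bound (k : β) (x : α) (hx : x ∈ s) : ‖g k x‖ ≤ bound k :=
    le_of_tendsto (((h_lim k).tendsto_at hx).norm) (h_bound.mono fun n h => h k x hx)
  have h_bound' : ∀ᶠ p in l ×ˢ 𝓟 s, ∀ k, ‖f p.1 k p.2‖ ≤ bound k ∧ ‖g k p.2‖ ≤ bound k :=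
    eventually_prod_principal_iff.2 <| h_bound.mono fun n h x hx k => ⟨h k x hx, hg_bound k x hx⟩
  simp only [tendstoUniformlyOn_iff_tendsto_sub] at h_lim ⊢
  have h_diff := tendsto_tsum_of_dominated_convergence (h_sum.add h_sum) h_lim <|
    h_bound'.mono fun p h k => (norm_sub_le _ _).trans (add_le_add (h k).2 (h k).1)
  rw [tsum_zero] at h_diff
  refine h_diff.congr' (h_bound'.mono fun p h => ?_)
  exact (Summable.tsum_sub (h_sum.of_norm_bounded fun k => (h k).2)
    (h_sum.of_norm_bounded fun k => (h k).1))

theorem tendstoUniformlyOn_tsum_mul_pow_of_dominated_convergence {ι 𝕜 : Type*}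
    [NormedField 𝕜] [CompleteSpace 𝕜] {l : Filter ι} {a : ι → ℕ → 𝕜} {b : ℕ → 𝕜}
    {R : ℝ} {bound : ℕ → ℝ} (h_sum : Summable bound)
    (h_lim : ∀ k, Tendsto (a · k) l (𝓝 (b k)))
    (h_bound : ∀ᶠ n in l, ∀ k, ‖a n k‖ * R ^ k ≤ bound k) :
    TendstoUniformlyOn (fun n z => ∑' k, a n k * z ^ k) (fun z => ∑' k, b k * z ^ k) l
      (Metric.closedBall 0 R) := by
  have h_pow (k : ℕ) (z : 𝕜) (hz : z ∈ Metric.closedBall 0 R) : ‖z ^ k‖ ≤ R ^ k := by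
    rw [norm_pow]
    exact pow_le_pow_left₀ (norm_nonneg z) (mem_closedBall_zero_iff.1 hz) k
  refine tendstoUniformlyOn_tsum_of_dominated_convergence h_sum (fun k => ?_) <|
    h_bound.mono fun n h k z hz => ?_
  · rw [tendstoUniformlyOn_iff_tendsto_sub]
    simp only [← sub_mul]
    refine Tendsto.zero_mul_isBoundedUnder_le ?_ ?_
    · simpa using (tendsto_const_nhds (x := b k)).sub ((h_lim k).comp tendsto_fst)
    · exact isBoundedUnder_of_eventually_le (a := R ^ k)
        (mem_prod_principal.2 (Eventually.of_forall fun n z hz => h_pow k z hz))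
  · rw [norm_mul]
    exact (mul_le_mul_of_nonneg_left (h_pow k z hz) (norm_nonneg _)).trans (h k)

theorem summable_prod_range_of_eventually_norm_le {R : Type*} [NormedCommRing R]
    [CompleteSpace R] {b : ℕ → R} {ρ : ℝ} (hρ : ρ < 1) (h : ∀ᶠ i in atTop, ‖b i‖ ≤ ρ) :
    Summable fun k => ∏ i ∈ range k, b i := by
  refine summable_of_ratio_norm_eventually_le hρ (h.mono fun i hi => ?_)
  rw [prod_range_succ, mul_comm ρ]
  exact (norm_mul_le _ _).trans (mul_le_mul_of_nonneg_left hi (norm_nonneg _))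

theorem summable_prod_range_max_half_div (A : ℝ) :
    Summable fun k => ∏ i ∈ range k, max (1 / 2 : ℝ) (A / (i + 1)) := by
  refine summable_prod_range_of_eventually_norm_le one_half_lt_one ?_
  filter_upwards [((tendsto_const_div_atTop_nhds_zero_nat A).comp
    (tendsto_add_atTop_nat 1)).eventually (ge_mem_nhds one_half_pos)] with i hi
  rw [Function.comp_apply, Nat.cast_succ] at hi
  rw [max_eq_left hi, Real.norm_of_nonneg one_half_pos.le]

theorem Finite.exists_pos_le_one_forall_le {ι : Type*} [Finite ι] {f : ι → ℝ}
    (hf : ∀ i, 0 < f i) : ∃ c, 0 < c ∧ c ≤ 1 ∧ ∀ i, c ≤ f i := by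
  obtain ⟨⟨c, hc⟩, h⟩ := Finite.exists_ge fun i => (⟨f i, hf i⟩ : Set.Ioi (0 : ℝ))
  exact ⟨min c 1, lt_min hc one_pos, min_le_right _ _, fun i => (min_le_left _ _).trans (h i)⟩

theorem div_min_pow_mul_le_max {K R x y : ℝ} {p : ℕ} (hK : 0 ≤ K) (hR : 0 ≤ R) (hx : 1 ≤ x)
    (hy : 1 ≤ y) (hp : p ≠ 0) (hxK : 2 * (K ^ p * R) ≤ x) :
    (K / min x y) ^ p * R ≤ max (1 / 2) (K ^ p * R / y) := by
  have hm : 1 ≤ min x y := le_min hx hy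
  calc (K / min x y) ^ p * R ≤ K ^ p * R / min x y := by
        rw [div_pow, div_mul_eq_mul_div]
        exact div_le_div_of_nonneg_left (by positivity) (by linarith) (le_self_pow₀ hm hp)
    _ ≤ max (1 / 2) (K ^ p * R / y) := by
        rcases min_choice x y with h | h <;> rw [h]
        · exact le_max_of_le_left (by rw [div_le_iff₀ (by linarith)]; linarith)
        · exact le_max_right _ _

theorem tendsto_intFloor_mul_add_div (q a : ℝ) :
    Tendsto (fun n : ℕ => ((⌊q * n⌋ : ℝ) + a) / n) atTop (𝓝 q) := by
  have h_lim (c : ℝ) : Tendsto (fun n : ℕ => q + c / n) atTop (𝓝 q) := by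
    simpa using tendsto_const_nhds.add (tendsto_const_div_atTop_nhds_zero_nat c)
  refine tendsto_of_tendsto_of_tendsto_of_le_of_le' (h_lim (a - 1)) (h_lim a) ?_ ?_ <;>
    filter_upwards [eventually_gt_atTop 0] with n hn <;>
    rw [← sub_nonneg] <;>
    field_simp [(Nat.cast_pos.2 hn : (0 : ℝ) < n).ne']
  · linarith [Int.sub_one_lt_floor (q * n)]
  · linarith [Int.floor_le (q * n)]

theorem abs_div_mul_le_div_min {u d c B x y : ℝ} (hx : 1 ≤ x) (hy : 1 ≤ y) (hc : 0 < c)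
    (hB : 0 ≤ B) (hu : |u| ≤ x + y + B) (hd : c * y ≤ d) :
    |u / (x * d)| ≤ (B + 2) / c / min x y := by
  have hxy : 0 < x * d := mul_pos (by linarith) (by nlinarith)
  have hmax : x + y + B ≤ (B + 2) * max x y := by
    nlinarith [le_max_left x y, le_max_right x y]
  rw [div_div, abs_div, abs_of_pos hxy, div_le_div_iff₀ hxy (by positivity)]
  calc |u| * (c * min x y) ≤ (B + 2) * max x y * (c * min x y) :=
        mul_le_mul_of_nonneg_right (hu.trans hmax) (by positivity)
    _ = (B + 2) * (c * (x * y)) := by rw [← min_mul_max x y]; ring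
    _ ≤ (B + 2) * (x * d) := mul_le_mul_of_nonneg_left (by nlinarith) (by linarith)

theorem hypergeometric_term_eq_prod {p s : ℕ} (a : Fin p → ℝ) (b : Fin s → ℝ) (x : ℂ) (k : ℕ) :
    (∏ j, (poch (a j) k : ℂ)) * x ^ k / ((∏ j, (poch (b j) k : ℂ)) * k.factorial) =
      ∏ i ∈ range k, ((((∏ j, (a j + i)) / ((∏ j, (b j + i)) * (i + 1)) : ℝ) : ℂ) * x) := by
  simp only [poch, prod_mul_distrib, prod_div_distrib, prod_const, card_range, Complex.ofReal_prod,
    Complex.ofReal_div, Complex.ofReal_mul, Complex.ofReal_add, Complex.ofReal_natCast,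
    Complex.ofReal_one]
  rw [← prod_range_add_one_eq_factorial, Nat.cast_prod]
  push_cast
  rw [prod_comm (s := range k), prod_comm (s := range k)]
  ring

section JacobiPineiro

variable {r : ℕ} (α : Fin r → ℝ) (β : ℝ) (q : Fin r → ℝ)

noncomputable def jacobiPineiroRatio (n i : ℕ) : ℝ :=
  (-((∑ j, (⌊q j * (n : ℝ)⌋ : ℝ)) + β) + i) / (n * (i + 1)) *
    ∏ j, (α j + (⌊q j * (n : ℝ)⌋ : ℝ) + 1 + i) / (n * (α j + 1 + i))

noncomputable def mehlerHeineRatio (i : ℕ) : ℝ :=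
  -1 / (i + 1) * ∏ j, q j / (α j + 1 + i)

theorem jacobiPineiro_term_eq (n k : ℕ) (z : ℂ) :
    ((poch (-((∑ j, (⌊q j * (n : ℝ)⌋ : ℝ)) + β)) k : ℂ) *
      ∏ j, (poch (α j + (⌊q j * (n : ℝ)⌋ : ℝ) + 1) k : ℂ)) *
      (z / (n : ℂ) ^ (r + 1)) ^ k /
      ((∏ j, (poch (α j + 1) k : ℂ)) * (k.factorial : ℂ)) =
    ((∏ i ∈ range k, jacobiPineiroRatio α β q n i : ℝ) : ℂ) * z ^ k := by
  have h := hypergeometric_term_eq_prod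
    (Fin.cons (-((∑ j, (⌊q j * (n : ℝ)⌋ : ℝ)) + β)) fun j => α j + (⌊q j * (n : ℝ)⌋ : ℝ) + 1)
    (fun j => α j + 1) (z / (n : ℂ) ^ (r + 1)) k
  simp only [Fin.prod_univ_succ, Fin.cons_zero, Fin.cons_succ] at h
  have h_ratio (i : ℕ) : jacobiPineiroRatio α β q n i =
      (-((∑ j, (⌊q j * (n : ℝ)⌋ : ℝ)) + β) + i) * (∏ j, (α j + (⌊q j * (n : ℝ)⌋ : ℝ) + 1 + i)) /
        ((∏ j, (α j + 1 + i)) * (i + 1)) / (n : ℝ) ^ (r + 1) := by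
    rw [jacobiPineiroRatio, prod_div_distrib, prod_mul_distrib, prod_const, card_univ,
      Fintype.card_fin, div_mul_div_comm, div_div]
    congr 1
    ring
  rw [h, pow_eq_prod_const z k, Complex.ofReal_prod, ← prod_mul_distrib]
  refine prod_congr rfl fun i _ => ?_
  rw [h_ratio]
  push_cast
  ring

theorem mehlerHeine_term_eq (k : ℕ) (z : ℂ) :
    (-(((∏ j, q j : ℝ) : ℂ)) * z) ^ k / ((∏ j, (poch (α j + 1) k : ℂ)) * (k.factorial : ℂ)) =
    ((∏ i ∈ range k, mehlerHeineRatio α q i : ℝ) : ℂ) * z ^ k := by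
  have h := hypergeometric_term_eq_prod Fin.elim0 (fun j => α j + 1)
    (-(((∏ j, q j : ℝ) : ℂ)) * z) k
  simp only [Fin.prod_univ_zero, one_mul] at h
  rw [h, pow_eq_prod_const z k, Complex.ofReal_prod (range k), ← prod_mul_distrib]
  refine prod_congr rfl fun i _ => ?_
  rw [mehlerHeineRatio, prod_div_distrib, div_mul_div_comm, neg_one_mul, mul_comm ((i : ℝ) + 1)]
  push_cast
  ring

theorem tendsto_jacobiPineiroRatio (hq1 : ∑ j, q j = 1) (i : ℕ) :
    Tendsto (fun n => jacobiPineiroRatio α β q n i) atTop (𝓝 (mehlerHeineRatio α q i)) := by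
  have h_sum : Tendsto (fun n : ℕ => (∑ j, (⌊q j * (n : ℝ)⌋ : ℝ)) / n) atTop (𝓝 1) := by
    simp only [sum_div, ← hq1]
    exact tendsto_finsetSum _ fun j _ => by simpa using tendsto_intFloor_mul_add_div (q j) 0
  have h_first : Tendsto (fun n : ℕ => (-((∑ j, (⌊q j * (n : ℝ)⌋ : ℝ)) + β) + i) / n) atTop
      (𝓝 (-1)) := by
    have h := h_sum.neg.add (tendsto_const_div_atTop_nhds_zero_nat ((i : ℝ) - β))
    rw [add_zero] at h
    exact h.congr fun n => by ring
  have h_factor (j : Fin r) : Tendsto (fun n : ℕ => (α j + (⌊q j * (n : ℝ)⌋ : ℝ) + 1 + i) / n)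
      atTop (𝓝 (q j)) :=
    (tendsto_intFloor_mul_add_div (q j) (α j + 1 + i)).congr fun n => by ring_nf
  simp only [jacobiPineiroRatio, ← div_div]
  exact (h_first.div_const _).mul (tendsto_finsetProd _ fun j _ => (h_factor j).div_const _)

theorem abs_jacobiPineiroRatio_le {B c : ℝ} (hq : ∀ j, 0 ≤ q j) (hq1 : ∑ j, q j = 1)
    (hB : 0 ≤ B) (hβ : |β| ≤ B) (hα : ∀ j, |α j| ≤ B) (hc : 0 < c) (hc1 : c ≤ 1)
    (hcα : ∀ j, c ≤ α j + 1) {n : ℕ} (hn : 1 ≤ n) (i : ℕ) :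
    |jacobiPineiroRatio α β q n i| ≤ ((B + 2) / c / min (n : ℝ) (i + 1)) ^ (r + 1) := by
  have h_floor_nonneg (j : Fin r) : 0 ≤ (⌊q j * (n : ℝ)⌋ : ℝ) := by
    exact_mod_cast Int.floor_nonneg.2 (mul_nonneg (hq j) (Nat.cast_nonneg n))
  have h_sum_le : ∑ j, (⌊q j * (n : ℝ)⌋ : ℝ) ≤ n :=
    calc ∑ j, (⌊q j * (n : ℝ)⌋ : ℝ) ≤ ∑ j, q j * n := sum_le_sum fun j _ => Int.floor_le _
      _ = n := by rw [← sum_mul, hq1, one_mul]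
  have h_floor_le (j : Fin r) : (⌊q j * (n : ℝ)⌋ : ℝ) ≤ n :=
    (single_le_sum (fun j _ => h_floor_nonneg j) (mem_univ j)).trans h_sum_le
  have hx : (1 : ℝ) ≤ n := Nat.one_le_cast.2 hn
  have hi : (0 : ℝ) ≤ i := Nat.cast_nonneg i
  have hy : (1 : ℝ) ≤ i + 1 := by linarith
  have h_first : |(-((∑ j, (⌊q j * (n : ℝ)⌋ : ℝ)) + β) + i) / (n * (i + 1))| ≤
      (B + 2) / c / min (n : ℝ) (i + 1) := by
    refine abs_div_mul_le_div_min hx hy hc hB (abs_le.2 ⟨?_, ?_⟩) (by nlinarith) <;>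
      linarith [abs_le.1 hβ, sum_nonneg fun j (_ : j ∈ univ) => h_floor_nonneg j]
  have h_factor (j : Fin r) : |(α j + (⌊q j * (n : ℝ)⌋ : ℝ) + 1 + i) / (n * (α j + 1 + i))| ≤
      (B + 2) / c / min (n : ℝ) (i + 1) := by
    refine abs_div_mul_le_div_min hx hy hc hB (abs_le.2 ⟨?_, ?_⟩) (by nlinarith [hcα j]) <;>
      linarith [abs_le.1 (hα j), h_floor_nonneg j, h_floor_le j]
  rw [jacobiPineiroRatio, abs_mul, abs_prod, pow_succ']
  refine mul_le_mul h_first ?_ (by positivity) (by positivity)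
  calc ∏ j, |(α j + (⌊q j * (n : ℝ)⌋ : ℝ) + 1 + i) / (n * (α j + 1 + i))|
      ≤ ∏ _j : Fin r, (B + 2) / c / min (n : ℝ) (i + 1) :=
        prod_le_prod (fun j _ => abs_nonneg _) fun j _ => h_factor j
    _ = ((B + 2) / c / min (n : ℝ) (i + 1)) ^ r := by
        rw [prod_const, card_univ, Fintype.card_fin]

end JacobiPineiro

theorem jacobi_pineiro_mehler_heine_general (r : ℕ) (α : Fin r → ℝ) (β : ℝ)
    (hα : ∀ j, α j > -1) (q : Fin r → ℝ) (hq : ∀ j, q j > 0)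
    (hq1 : ∑ j, q j = 1) :
    ∀ K : Set ℂ, IsCompact K →
      TendstoUniformlyOn
        (fun (n : ℕ) (z : ℂ) => ∑' k : ℕ,
          ((poch (-((∑ j, (⌊q j * (n : ℝ)⌋ : ℝ)) + β)) k : ℂ) *
            ∏ j, (poch (α j + (⌊q j * (n : ℝ)⌋ : ℝ) + 1) k : ℂ)) *
            (z / (n : ℂ) ^ (r + 1)) ^ k /
            ((∏ j, (poch (α j + 1) k : ℂ)) * (k.factorial : ℂ)))
        (fun z : ℂ => ∑' k : ℕ,
          (-(((∏ j, q j : ℝ) : ℂ)) * z) ^ k /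
            ((∏ j, (poch (α j + 1) k : ℂ)) * (k.factorial : ℂ)))
        atTop K := by
  intro K hK
  obtain ⟨R, hR0, hR⟩ := hK.isBounded.exists_pos_norm_le
  obtain ⟨c, hc0, hc1, hcα⟩ :=
    Finite.exists_pos_le_one_forall_le (f := fun j => α j + 1) fun j => by linarith [hα j]
  set B := |β| + ∑ j, |α j|
  have hαB (j : Fin r) : |α j| ≤ B := (single_le_sum (fun j _ => abs_nonneg (α j))
    (mem_univ j)).trans (le_add_of_nonneg_left (abs_nonneg β))
  set A := ((B + 2) / c) ^ (r + 1) * R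
  have h_coeff (k : ℕ) :
      Tendsto (fun n => ((∏ i ∈ range k, jacobiPineiroRatio α β q n i : ℝ) : ℂ)) atTop
        (𝓝 ((∏ i ∈ range k, mehlerHeineRatio α q i : ℝ) : ℂ)) :=
    (Complex.continuous_ofReal.tendsto _).comp <|
      tendsto_finsetProd _ fun i _ => tendsto_jacobiPineiroRatio α β q hq1 i
  have h_factor_le {n : ℕ} (hn : 1 ≤ n) (hnA : 2 * A ≤ n) (i : ℕ) :
      |jacobiPineiroRatio α β q n i| * R ≤ max (1 / 2) (A / (i + 1)) :=
    (mul_le_mul_of_nonneg_right (abs_jacobiPineiroRatio_le α β q (fun j => (hq j).le) hq1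
      (by positivity) (le_add_of_nonneg_right (by positivity)) hαB hc0 hc1 hcα hn i) hR0.le).trans
    (div_min_pow_mul_le_max (by positivity) hR0.le (Nat.one_le_cast.2 hn)
      (le_add_of_nonneg_left (Nat.cast_nonneg i)) (Nat.succ_ne_zero r) hnA)
  simp only [jacobiPineiro_term_eq, mehlerHeine_term_eq]
  refine (tendstoUniformlyOn_tsum_mul_pow_of_dominated_convergence (R := R)
    (summable_prod_range_max_half_div A) h_coeff ?_).mono
    fun z hz => mem_closedBall_zero_iff.2 (hR z hz)
  filter_upwards [eventually_ge_atTop 1,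
    tendsto_natCast_atTop_atTop.eventually_ge_atTop (2 * A)] with n hn hnA k
  rw [Complex.norm_real, Real.norm_eq_abs, abs_prod, pow_eq_prod_const R k, ← prod_mul_distrib]
  exact prod_le_prod (fun i _ => by positivity) fun i _ => h_factor_le hn hnA i

/-- The Mehler–Heine limit for Jacobi–Piñeiro polynomials: with
`F_n(x) = ₍r+1₎F_r(-|n⃗|-β, α_1+n_1+1,…,α_r+n_r+1; α_1+1,…,α_r+1; x)` and
`n_j = ⌊q_j n⌋`, one has `F_n(z/n^{r+1}) → ₀F_r(-; α_1+1,…,α_r+1; -q_1⋯q_r z)`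
uniformly on compact subsets of `ℂ`. -/
theorem jacobi_pineiro_mehler_heine (r : ℕ) (hr : 1 ≤ r) (α : Fin r → ℝ) (β : ℝ)
    (hα : ∀ j, α j > -1) (hβ : β > -1) (q : Fin r → ℝ) (hq : ∀ j, q j > 0)
    (hq1 : ∑ j, q j = 1) :
    ∀ K : Set ℂ, IsCompact K →
      TendstoUniformlyOn
        (fun (n : ℕ) (z : ℂ) => ∑' k : ℕ,
          ((poch (-((∑ j, (⌊q j * (n : ℝ)⌋ : ℝ)) + β)) k : ℂ) *
            ∏ j, (poch (α j + (⌊q j * (n : ℝ)⌋ : ℝ) + 1) k : ℂ)) *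
            (z / (n : ℂ) ^ (r + 1)) ^ k /
            ((∏ j, (poch (α j + 1) k : ℂ)) * (k.factorial : ℂ)))
        (fun z : ℂ => ∑' k : ℕ,
          (-(((∏ j, q j : ℝ) : ℂ)) * z) ^ k /
            ((∏ j, (poch (α j + 1) k : ℂ)) * (k.factorial : ℂ)))
        atTop K :=
  jacobi_pineiro_mehler_heine_general r α β hα q hq hq1
end
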